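/- arXiv:1301.6000 — 3 statements merged into one kernel-verified Lean document; each statement's English description precedes it below -/
import Mathlib

section
/- Under the décalage isomorphism, the conditions on a degree -1 graded-antisymmetric bilinear map h on a DGLA L (namely [a,b] = dh(a,b)+h(da,b)+(-1)^{|a|}h(a,db) and the cyclic identity ∮[h(a,b),c] + ∮h([a,b],c) = 0) are equivalent to the conditions [r,q₁]_{NR} = q₂ and [r,q₂]_{NR} = 0, where V = L[1], q₁ = -d, q₂(a,b) = (-1)^{|a|}[a,b], r(a,b) = (-1)^{|a|}h(a,b), and [·,·]_{NR} is the Nijenhuis-Richardson bracket on Hom(S̄^c V, V). -/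
/-!
Expanding the décalage signs, `[r,q₁]_NR(a,b) - q₂(a,b)` is `(-1)^{|a|}` times the defect
`dh(a,b) + h(da,b) + (-1)^{|a|}h(a,db) - [a,b]` of condition (2); that defect is linear in `b`,
so it vanishes as soon as it vanishes on homogeneous `b`. Likewise `[r,q₂]_NR(a,b,c)` is a signed
sum of the three summands `[h(x,y),z] + h([x,y],z)` for `(x,y,z) = (a,b,c), (a,c,b), (b,c,a)`;
graded antisymmetry of `h` and of the bracket turns the `(a,c,b)` summand into the `(c,a,b)` one,
and the sum becomes `(-1)^{|b|}` times the cyclic sum of condition (3). Every sign is a power of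
`-1`, so it only depends on the parities of the degrees.
-/

universe u

/-- A bundled ℤ-graded differential graded Lie algebra over `K`. -/
structure DGLA (K : Type u) [Field K] where
  carrier : Type u
  [acg : AddCommGroup carrier]
  [mod : Module K carrier]
  grading : ℤ → Submodule K carrier
  grading_top : (⨆ i, grading i) = ⊤
  bracket : carrier →ₗ[K] carrier →ₗ[K] carrier
  d : carrier →ₗ[K] carrier
  d_sq : ∀ x, d (d x) = 0
  d_deg : ∀ i, ∀ a ∈ grading i, d a ∈ grading (i + 1)
  bracket_deg : ∀ i j, ∀ a ∈ grading i, ∀ b ∈ grading j, bracket a b ∈ grading (i + j)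
  bracket_antisymm : ∀ i j, ∀ a ∈ grading i, ∀ b ∈ grading j,
    bracket a b = -((-1 : K) ^ (i * j) • bracket b a)
  jacobi : ∀ i j, ∀ a ∈ grading i, ∀ b ∈ grading j, ∀ c,
    bracket a (bracket b c) =
      bracket (bracket a b) c + (-1 : K) ^ (i * j) • bracket b (bracket a c)
  leibniz : ∀ i, ∀ a ∈ grading i, ∀ b,
    d (bracket a b) = bracket (d a) b + (-1 : K) ^ i • bracket a (d b)

attribute [instance] DGLA.acg DGLA.mod

/-- A morphism of differential graded Lie algebras. -/
structure DGLAHom (K : Type u) [Field K] (A B : DGLA K) where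
  toFun : A.carrier →ₗ[K] B.carrier
  map_d : ∀ x, toFun (A.d x) = B.d (toFun x)
  map_bracket : ∀ x y, toFun (A.bracket x y) = B.bracket (toFun x) (toFun y)
  map_grading : ∀ i, ∀ a ∈ A.grading i, toFun a ∈ B.grading i

/-- A morphism of DGLAs is a quasi-isomorphism if it is injective and
surjective on cohomology (stated elementwise). -/
def DGLAHom.IsQuasiIso {K : Type u} [Field K] {A B : DGLA K} (f : DGLAHom K A B) : Prop :=
  (∀ x, A.d x = 0 → (∃ m, f.toFun x = B.d m) → ∃ l, x = A.d l) ∧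
  (∀ y, B.d y = 0 → ∃ x, A.d x = 0 ∧ ∃ m, y - f.toFun x = B.d m)

/-- A DGLA is abelian if its bracket vanishes identically. -/
def DGLA.IsAbelian {K : Type u} [Field K] (A : DGLA K) : Prop := ∀ x y, A.bracket x y = 0

/-- A DGLA is homotopy abelian if it is connected to an abelian DGLA by a roof
of quasi-isomorphisms. -/
def DGLA.IsHomotopyAbelian {K : Type u} [Field K] (A : DGLA K) : Prop :=
  ∃ (M H : DGLA K) (f : DGLAHom K M A) (g : DGLAHom K M H),
    H.IsAbelian ∧ f.IsQuasiIso ∧ g.IsQuasiIso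


section

variable {K : Type u} [Field K] (L : DGLA K)

/-- `r(a,b) = (-1)^{|a|} h(a,b)` where `i` is the degree of the first
argument. -/
def decR (h : L.carrier →ₗ[K] L.carrier →ₗ[K] L.carrier)
    (i : ℤ) (a b : L.carrier) : L.carrier := (-1 : K) ^ i • h a b

/-- `q₂(a,b) = (-1)^{|a|} [a,b]` where `i` is the degree of the first
argument. -/
def decQ2 (i : ℤ) (a b : L.carrier) : L.carrier := (-1 : K) ^ i • L.bracket a b

/-- `q₁ = -d`. -/
def decQ1 : L.carrier →ₗ[K] L.carrier := -L.d

end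


section

variable {K : Type u} [Field K] (L : DGLA K) (h : L.carrier →ₗ[K] L.carrier →ₗ[K] L.carrier)

theorem DGLA.linearMap_ext_of_homogeneous {M : Type*} [AddCommGroup M] [Module K M]
    {f g : L.carrier →ₗ[K] M} (H : ∀ j, ∀ b ∈ L.grading j, f b = g b) : f = g := by
  have hle : ⨆ j, L.grading j ≤ LinearMap.eqLocus f g := iSup_le fun j b hb => H j b hb
  exact LinearMap.ext fun b => hle (L.grading_top ▸ Submodule.mem_top)

/-- `[r,q₁]_NR(a,b)`, with `i = |a|`. -/
def nrBracketRQ₁ (i : ℤ) (a b : L.carrier) : L.carrier :=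
  decR L h (i + 1) (decQ1 L a) b + (-1 : K) ^ (i - 1) • decR L h i a (decQ1 L b)
    - decQ1 L (decR L h i a b)

/-- `[r,q₂]_NR(a,b,c)`, with `i = |a|`, `j = |b|`, `k = |c|`; the signs are the Koszul signs
of the shuffles of `(a,b,c)` for the shifted degrees `|a| - 1`, `|b| - 1`, `|c| - 1`. -/
def nrBracketRQ₂ (i j k : ℤ) (a b c : L.carrier) : L.carrier :=
  (decR L h (i + j) (decQ2 L i a b) c
      + (-1 : K) ^ ((j - 1) * (k - 1)) • decR L h (i + k) (decQ2 L i a c) b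
      + (-1 : K) ^ ((i - 1) * (j + k - 2)) • decR L h (j + k) (decQ2 L j b c) a)
    - (decQ2 L (i + j - 1) (decR L h i a b) c
      + (-1 : K) ^ ((j - 1) * (k - 1)) • decQ2 L (i + k - 1) (decR L h i a c) b
      + (-1 : K) ^ ((i - 1) * (j + k - 2)) • decQ2 L (j + k - 1) (decR L h j b c) a)

def cyclicSummand (a b c : L.carrier) : L.carrier :=
  L.bracket (h a b) c + h (L.bracket a b) c

theorem nrBracketRQ₁_sub_decQ2 (i : ℤ) (a b : L.carrier) :
    nrBracketRQ₁ L h i a b - decQ2 L i a b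
      = (-1 : K) ^ i •
        (L.d (h a b) + h (L.d a) b + (-1 : K) ^ i • h a (L.d b) - L.bracket a b) := by
  simp only [nrBracketRQ₁, decR, decQ1, decQ2, LinearMap.neg_apply, map_neg, map_smul,
    neg_one_zpow_eq_ite]
  by_cases hi : Even i <;>
    simp only [Int.even_add_one, Int.even_sub_one, hi, not_true_eq_false, not_false_eq_true,
      ite_true, ite_false] <;> module

theorem nrBracketRQ₁_eq_decQ2_iff (i : ℤ) (a b : L.carrier) :
    nrBracketRQ₁ L h i a b = decQ2 L i a b ↔
      L.bracket a b = L.d (h a b) + h (L.d a) b + (-1 : K) ^ i • h a (L.d b) := by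
  rw [← sub_eq_zero, nrBracketRQ₁_sub_decQ2,
    smul_eq_zero_iff_right (zpow_ne_zero i (by norm_num)), sub_eq_zero, eq_comm]

theorem nrBracketRQ₂_eq (i j k : ℤ) (a b c : L.carrier) :
    nrBracketRQ₂ L h i j k a b c
      = (-1 : K) ^ j • cyclicSummand L h a b c
        + (-1 : K) ^ ((j - 1) * (k - 1) + k) • cyclicSummand L h a c b
        + (-1 : K) ^ ((i - 1) * (j + k) + k) • cyclicSummand L h b c a := by
  simp only [nrBracketRQ₂, cyclicSummand, decR, decQ2, map_smul, LinearMap.smul_apply,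
    neg_one_zpow_eq_ite]
  by_cases hi : Even i <;> by_cases hj : Even j <;> by_cases hk : Even k <;>
    simp only [Int.even_add, Int.even_sub, Int.even_mul, even_two, Int.not_even_one, hi, hj, hk,
      iff_true, iff_false, not_true_eq_false, or_true, or_false, ite_true, ite_false] <;> module

variable {L h}

theorem cyclicSummand_swap
    (h_antisymm : ∀ i j, ∀ a ∈ L.grading i, ∀ b ∈ L.grading j,
      h a b = -((-1 : K) ^ (i * j) • h b a))
    {i k : ℤ} {a c : L.carrier} (ha : a ∈ L.grading i) (hc : c ∈ L.grading k)
    (b : L.carrier) :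
    cyclicSummand L h a c b = -((-1 : K) ^ (i * k) • cyclicSummand L h c a b) := by
  simp only [cyclicSummand, h_antisymm i k a ha c hc, L.bracket_antisymm i k a ha c hc,
    map_neg, map_smul, LinearMap.neg_apply, LinearMap.smul_apply]
  module

theorem nrBracketRQ₂_eq_smul_cyclic
    (h_antisymm : ∀ i j, ∀ a ∈ L.grading i, ∀ b ∈ L.grading j,
      h a b = -((-1 : K) ^ (i * j) • h b a))
    {i k : ℤ} {a c : L.carrier} (ha : a ∈ L.grading i) (hc : c ∈ L.grading k)
    (j : ℤ) (b : L.carrier) :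
    nrBracketRQ₂ L h i j k a b c = (-1 : K) ^ j •
      ((L.bracket (h a b) c + (-1 : K) ^ (i * (j + k)) • L.bracket (h b c) a
          + (-1 : K) ^ (k * (i + j)) • L.bracket (h c a) b)
        + (h (L.bracket a b) c + (-1 : K) ^ (i * (j + k)) • h (L.bracket b c) a
          + (-1 : K) ^ (k * (i + j)) • h (L.bracket c a) b)) := by
  rw [nrBracketRQ₂_eq, cyclicSummand_swap h_antisymm ha hc]
  simp only [cyclicSummand, neg_one_zpow_eq_ite]
  by_cases hi : Even i <;> by_cases hj : Even j <;> by_cases hk : Even k <;>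
    simp only [Int.even_add, Int.even_sub, Int.even_mul, Int.not_even_one, hi, hj, hk,
      iff_true, iff_false, not_true_eq_false, or_true, or_false, ite_true, ite_false] <;> module

end

theorem decalage_NR_equivalence_general (K : Type u) [Field K]
    (L : DGLA K) (h : L.carrier →ₗ[K] L.carrier →ₗ[K] L.carrier)
    (h_antisymm : ∀ i j, ∀ a ∈ L.grading i, ∀ b ∈ L.grading j,
      h a b = -((-1 : K) ^ (i * j) • h b a)) :
    -- conditions (2) and (3) on h …
    ((∀ i, ∀ a ∈ L.grading i, ∀ b,
        L.bracket a b = L.d (h a b) + h (L.d a) b + (-1 : K) ^ i • h a (L.d b)) ∧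
     (∀ i j k, ∀ a ∈ L.grading i, ∀ b ∈ L.grading j, ∀ c ∈ L.grading k,
        (L.bracket (h a b) c + (-1 : K) ^ (i * (j + k)) • L.bracket (h b c) a
            + (-1 : K) ^ (k * (i + j)) • L.bracket (h c a) b)
          + (h (L.bracket a b) c + (-1 : K) ^ (i * (j + k)) • h (L.bracket b c) a
            + (-1 : K) ^ (k * (i + j)) • h (L.bracket c a) b) = 0))
    ↔
    -- … are equivalent to [r,q₁]_NR = q₂ and [r,q₂]_NR = 0
    ((∀ i j, ∀ a ∈ L.grading i, ∀ b ∈ L.grading j,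
        decR L h (i + 1) (decQ1 L a) b
          + (-1 : K) ^ (i - 1) • decR L h i a (decQ1 L b)
          - decQ1 L (decR L h i a b)
        = decQ2 L i a b) ∧
     (∀ i j k, ∀ a ∈ L.grading i, ∀ b ∈ L.grading j, ∀ c ∈ L.grading k,
        (decR L h (i + j) (decQ2 L i a b) c
            + (-1 : K) ^ ((j - 1) * (k - 1)) • decR L h (i + k) (decQ2 L i a c) b
            + (-1 : K) ^ ((i - 1) * (j + k - 2)) • decR L h (j + k) (decQ2 L j b c) a)
          - (decQ2 L (i + j - 1) (decR L h i a b) c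
            + (-1 : K) ^ ((j - 1) * (k - 1)) • decQ2 L (i + k - 1) (decR L h i a c) b
            + (-1 : K) ^ ((i - 1) * (j + k - 2)) • decQ2 L (j + k - 1) (decR L h j b c) a)
        = 0)) := by
  refine and_congr ⟨fun H i j a ha b _ => (nrBracketRQ₁_eq_decQ2_iff L h i a b).2 (H i a ha b),
    fun H i a ha b => ?_⟩ ?_
  · have hlin : L.bracket a = L.d ∘ₗ h a + h (L.d a) + (-1 : K) ^ i • (h a ∘ₗ L.d) :=
      L.linearMap_ext_of_homogeneous fun j b hb =>
        (nrBracketRQ₁_eq_decQ2_iff L h i a b).1 (H i j a ha b hb)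
    exact LinearMap.congr_fun hlin b
  · refine forall₃_congr fun i j k => forall₂_congr fun a ha => forall₂_congr fun b _ =>
      forall₂_congr fun c hc => ?_
    change _ ↔ nrBracketRQ₂ L h i j k a b c = 0
    rw [nrBracketRQ₂_eq_smul_cyclic h_antisymm ha hc,
      smul_eq_zero_iff_right (zpow_ne_zero j (by norm_num))]

/-- For a DGLA `L` with a degree `-1` graded-antisymmetric
bilinear map `h`, the conditions
`[a,b] = dh(a,b) + h(da,b) + (-1)^{|a|}h(a,db)` and
`∮[h(a,b),c] + ∮h([a,b],c) = 0` hold if and only if the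
Nijenhuis–Richardson identities `[r,q₁]_{NR} = q₂` and `[r,q₂]_{NR} = 0`
hold. -/
theorem decalage_NR_equivalence (K : Type u) [Field K] [CharZero K]
    (L : DGLA K) (h : L.carrier →ₗ[K] L.carrier →ₗ[K] L.carrier)
    (h_deg : ∀ i j, ∀ a ∈ L.grading i, ∀ b ∈ L.grading j, h a b ∈ L.grading (i + j - 1))
    (h_antisymm : ∀ i j, ∀ a ∈ L.grading i, ∀ b ∈ L.grading j,
      h a b = -((-1 : K) ^ (i * j) • h b a)) :
    -- conditions (2) and (3) on h …
    ((∀ i, ∀ a ∈ L.grading i, ∀ b,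
        L.bracket a b = L.d (h a b) + h (L.d a) b + (-1 : K) ^ i • h a (L.d b)) ∧
     (∀ i j k, ∀ a ∈ L.grading i, ∀ b ∈ L.grading j, ∀ c ∈ L.grading k,
        (L.bracket (h a b) c + (-1 : K) ^ (i * (j + k)) • L.bracket (h b c) a
            + (-1 : K) ^ (k * (i + j)) • L.bracket (h c a) b)
          + (h (L.bracket a b) c + (-1 : K) ^ (i * (j + k)) • h (L.bracket b c) a
            + (-1 : K) ^ (k * (i + j)) • h (L.bracket c a) b) = 0))
    ↔
    -- … are equivalent to [r,q₁]_NR = q₂ and [r,q₂]_NR = 0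
    ((∀ i j, ∀ a ∈ L.grading i, ∀ b ∈ L.grading j,
        decR L h (i + 1) (decQ1 L a) b
          + (-1 : K) ^ (i - 1) • decR L h i a (decQ1 L b)
          - decQ1 L (decR L h i a b)
        = decQ2 L i a b) ∧
     (∀ i j k, ∀ a ∈ L.grading i, ∀ b ∈ L.grading j, ∀ c ∈ L.grading k,
        (decR L h (i + j) (decQ2 L i a b) c
            + (-1 : K) ^ ((j - 1) * (k - 1)) • decR L h (i + k) (decQ2 L i a c) b
            + (-1 : K) ^ ((i - 1) * (j + k - 2)) • decR L h (j + k) (decQ2 L j b c) a)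
          - (decQ2 L (i + j - 1) (decR L h i a b) c
            + (-1 : K) ^ ((j - 1) * (k - 1)) • decQ2 L (i + k - 1) (decR L h i a c) b
            + (-1 : K) ^ ((i - 1) * (j + k - 2)) • decQ2 L (j + k - 1) (decR L h j b c) a)
        = 0)) :=
  decalage_NR_equivalence_general K L h h_antisymm
end

section
/- Let M = L ⊕ A be a graded Lie algebra over a field of characteristic 0 decomposed as a direct sum of graded vector spaces, where L and A are graded Lie subalgebras and A is abelian; let P: M → A be the projection with kernel L. For any derivation D of M with D(L) ⊆ L, the derived bracket {a,b}²_D = P[Da,b] is graded symmetric on A: {a,b}²_D = (-1)^{|a||b|} {b,a}²_D. -/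
/-!
Since `A` is abelian, `[a, b] = 0`, so the derivation rule gives
`0 = D[a, b] = [Da, b] ± [a, Db]`. Graded antisymmetry turns `[a, Db]` into `±[Db, a]`, and the two
signs combine to `(-1)^{|a||b|}`. Hence `[Da, b] = (-1)^{|a||b|} [Db, a]` already holds in `M`,
before projecting to `A`.
-/

lemma neg_one_zpow_mul_mul_add {α : Type*} [DivisionRing α] (d i j : ℤ) :
    (-1 : α) ^ (d * i) * (-1) ^ (i * (j + d)) = (-1) ^ (i * j) := by
  have hne : (-1 : α) ≠ 0 := neg_ne_zero.2 one_ne_zero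
  rw [← zpow_add₀ hne, show d * i + i * (j + d) = i * j + 2 * (d * i) by ring, zpow_add₀ hne,
    (even_two_mul _).neg_one_zpow, mul_one]

section GradedDerivation

variable {K M : Type*} [Field K] [AddCommGroup M] [Module K M]
  {gr : ℤ → Submodule K M} {brk : M →ₗ[K] M →ₗ[K] M} {D : M →ₗ[K] M} {dD : ℤ}

lemma derivation_bracket_swap_of_bracket_eq_zero
    (brk_antisymm : ∀ i j, ∀ a ∈ gr i, ∀ b ∈ gr j, brk a b = -((-1 : K) ^ (i * j) • brk b a))
    (hD_deg : ∀ i, ∀ a ∈ gr i, D a ∈ gr (i + dD))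
    (hD_der : ∀ i, ∀ a ∈ gr i, ∀ b,
      D (brk a b) = brk (D a) b + (-1 : K) ^ (dD * i) • brk a (D b))
    {i j : ℤ} {a b : M} (hai : a ∈ gr i) (hbj : b ∈ gr j) (hab : brk a b = 0) :
    brk (D a) b = (-1 : K) ^ (i * j) • brk (D b) a := by
  have hleibniz : brk (D a) b = -((-1 : K) ^ (dD * i) • brk a (D b)) := by
    rw [eq_neg_iff_add_eq_zero, ← hD_der i a hai b, hab, map_zero]
  rw [hleibniz, brk_antisymm i (j + dD) a hai (D b) (hD_deg j b hbj), smul_neg, neg_neg,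
    smul_smul, neg_one_zpow_mul_mul_add]

end GradedDerivation

theorem derived_bracket_symmetric_general (K : Type*) [Field K]
    (M : Type*) [AddCommGroup M] [Module K M]
    (gr : ℤ → Submodule K M)
    (brk : M →ₗ[K] M →ₗ[K] M)
    (brk_antisymm : ∀ i j, ∀ a ∈ gr i, ∀ b ∈ gr j,
      brk a b = -((-1 : K) ^ (i * j) • brk b a))
    (Lsub Asub : Submodule K M) (hcompl : IsCompl Lsub Asub)
    (hAab : ∀ x ∈ Asub, ∀ y ∈ Asub, brk x y = 0)
    (D : M →ₗ[K] M) (dD : ℤ)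
    (hD_deg : ∀ i, ∀ a ∈ gr i, D a ∈ gr (i + dD))
    (hD_der : ∀ i, ∀ a ∈ gr i, ∀ b,
      D (brk a b) = brk (D a) b + (-1 : K) ^ (dD * i) • brk a (D b)) :
    ∀ i j, ∀ a ∈ Asub, ∀ b ∈ Asub, a ∈ gr i → b ∈ gr j →
      (Asub.subtype ∘ₗ Submodule.linearProjOfIsCompl Asub Lsub hcompl.symm)
          (brk (D a) b)
        = (-1 : K) ^ (i * j) •
          (Asub.subtype ∘ₗ Submodule.linearProjOfIsCompl Asub Lsub hcompl.symm)
            (brk (D b) a) := by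
  intro i j a ha b hb hai hbj
  rw [derivation_bracket_swap_of_bracket_eq_zero brk_antisymm hD_deg hD_der hai hbj
    (hAab a ha b hb), map_smul]

/-- Graded symmetry of the binary derived bracket. -/
theorem derived_bracket_symmetric (K : Type*) [Field K] [CharZero K]
    (M : Type*) [AddCommGroup M] [Module K M]
    (gr : ℤ → Submodule K M) (grading_top : (⨆ i, gr i) = ⊤)
    (brk : M →ₗ[K] M →ₗ[K] M)
    (brk_deg : ∀ i j, ∀ a ∈ gr i, ∀ b ∈ gr j, brk a b ∈ gr (i + j))
    (brk_antisymm : ∀ i j, ∀ a ∈ gr i, ∀ b ∈ gr j,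
      brk a b = -((-1 : K) ^ (i * j) • brk b a))
    (brk_jacobi : ∀ i j, ∀ a ∈ gr i, ∀ b ∈ gr j, ∀ c,
      brk a (brk b c) = brk (brk a b) c + (-1 : K) ^ (i * j) • brk b (brk a c))
    (Lsub Asub : Submodule K M) (hcompl : IsCompl Lsub Asub)
    (hLsub : ∀ x ∈ Lsub, ∀ y ∈ Lsub, brk x y ∈ Lsub)
    (hAab : ∀ x ∈ Asub, ∀ y ∈ Asub, brk x y = 0)
    (D : M →ₗ[K] M) (dD : ℤ)
    (hD_deg : ∀ i, ∀ a ∈ gr i, D a ∈ gr (i + dD))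
    (hD_der : ∀ i, ∀ a ∈ gr i, ∀ b,
      D (brk a b) = brk (D a) b + (-1 : K) ^ (dD * i) • brk a (D b))
    (hDL : ∀ x ∈ Lsub, D x ∈ Lsub) :
    ∀ i j, ∀ a ∈ Asub, ∀ b ∈ Asub, a ∈ gr i → b ∈ gr j →
      (Asub.subtype ∘ₗ Submodule.linearProjOfIsCompl Asub Lsub hcompl.symm)
          (brk (D a) b)
        = (-1 : K) ^ (i * j) •
          (Asub.subtype ∘ₗ Submodule.linearProjOfIsCompl Asub Lsub hcompl.symm)
            (brk (D b) a) :=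
  derived_bracket_symmetric_general K M gr brk brk_antisymm Lsub Asub hcompl hAab D dD hD_deg hD_der
end

section
/- In Voronov's setup (graded Lie algebra M = L ⊕ A, L and A graded Lie subalgebras, A abelian, P the projection onto A along L), for any derivation D of M preserving L and for any a₁, a₂, a₃ ∈ A, the trilinear derived bracket {a₁,a₂,a₃}³_D = P[[Da₁,a₂],a₃] is graded symmetric in its arguments (with Koszul signs with respect to shifted degrees). -/
/-!
Both symmetries hold already before projecting to `A`, and only need that the arguments commute.
Applying `D` to `[a₁, a₂] = 0` gives `[Da₁, a₂] = ± [Da₂, a₁]`; the Jacobi identity for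
`[Da₁, [a₂, a₃]] = 0` gives `[[Da₁, a₂], a₃] = ± [[Da₁, a₃], a₂]`. In both cases the sign is
`(-1)^{|a_i||a_{i+1}|}` because the cross terms with `|D|` (resp. `|Da₁|`) occur twice and cancel.
-/

theorem neg_one_zpow_mul_neg_one_zpow_of_even_sub {K : Type*} [DivisionRing K] {a b c : ℤ}
    (h : Even (a + b - c)) : (-1 : K) ^ a * (-1 : K) ^ b = (-1 : K) ^ c := by
  have hne : (-1 : K) ≠ 0 := neg_ne_zero.2 one_ne_zero
  rw [← zpow_add₀ hne, ← sub_add_cancel (a + b) c, zpow_add₀ hne, h.neg_one_zpow, one_mul]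

section GradedBracket

variable {K : Type*} [Field K] {M : Type*} [AddCommGroup M] [Module K M]
  {gr : ℤ → Submodule K M} {brk : M →ₗ[K] M →ₗ[K] M}

theorem brk_derivation_swap_of_brk_eq_zero
    (brk_antisymm : ∀ i j, ∀ a ∈ gr i, ∀ b ∈ gr j,
      brk a b = -((-1 : K) ^ (i * j) • brk b a))
    {D : M →ₗ[K] M} {dD : ℤ} (hD_deg : ∀ i, ∀ a ∈ gr i, D a ∈ gr (i + dD))
    (hD_der : ∀ i, ∀ a ∈ gr i, ∀ b,
      D (brk a b) = brk (D a) b + (-1 : K) ^ (dD * i) • brk a (D b))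
    {i j : ℤ} {a b : M} (ha : a ∈ gr i) (hb : b ∈ gr j) (hab : brk a b = 0) :
    brk (D a) b = (-1 : K) ^ (i * j) • brk (D b) a := by
  have hder := hD_der i a ha b
  rw [hab, map_zero, brk_antisymm i (j + dD) a ha (D b) (hD_deg j b hb)] at hder
  rw [← neg_one_zpow_mul_neg_one_zpow_of_even_sub (a := dD * i) (b := i * (j + dD))
    ⟨dD * i, by ring⟩, mul_smul]
  linear_combination (norm := module) -hder

theorem brk_brk_swap_of_brk_eq_zero
    (brk_deg : ∀ i j, ∀ a ∈ gr i, ∀ b ∈ gr j, brk a b ∈ gr (i + j))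
    (brk_antisymm : ∀ i j, ∀ a ∈ gr i, ∀ b ∈ gr j,
      brk a b = -((-1 : K) ^ (i * j) • brk b a))
    (brk_jacobi : ∀ i j, ∀ a ∈ gr i, ∀ b ∈ gr j, ∀ c,
      brk a (brk b c) = brk (brk a b) c + (-1 : K) ^ (i * j) • brk b (brk a c))
    {k j l : ℤ} {x b c : M} (hx : x ∈ gr k) (hb : b ∈ gr j) (hc : c ∈ gr l)
    (hbc : brk b c = 0) :
    brk (brk x b) c = (-1 : K) ^ (j * l) • brk (brk x c) b := by
  have hjac := brk_jacobi k j x hx b hb c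
  rw [hbc, map_zero, brk_antisymm j (k + l) b hb (brk x c) (brk_deg k l x hx c hc)] at hjac
  rw [← neg_one_zpow_mul_neg_one_zpow_of_even_sub (a := k * j) (b := j * (k + l))
    ⟨k * j, by ring⟩, mul_smul]
  linear_combination (norm := module) -hjac

end GradedBracket

theorem ternary_derived_bracket_symmetric_general (K : Type*) [Field K]
    (M : Type*) [AddCommGroup M] [Module K M]
    (gr : ℤ → Submodule K M)
    (brk : M →ₗ[K] M →ₗ[K] M)
    (brk_deg : ∀ i j, ∀ a ∈ gr i, ∀ b ∈ gr j, brk a b ∈ gr (i + j))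
    (brk_antisymm : ∀ i j, ∀ a ∈ gr i, ∀ b ∈ gr j,
      brk a b = -((-1 : K) ^ (i * j) • brk b a))
    (brk_jacobi : ∀ i j, ∀ a ∈ gr i, ∀ b ∈ gr j, ∀ c,
      brk a (brk b c) = brk (brk a b) c + (-1 : K) ^ (i * j) • brk b (brk a c))
    (Lsub Asub : Submodule K M) (hcompl : IsCompl Lsub Asub)
    (hAab : ∀ x ∈ Asub, ∀ y ∈ Asub, brk x y = 0)
    (D : M →ₗ[K] M) (dD : ℤ)
    (hD_deg : ∀ i, ∀ a ∈ gr i, D a ∈ gr (i + dD))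
    (hD_der : ∀ i, ∀ a ∈ gr i, ∀ b,
      D (brk a b) = brk (D a) b + (-1 : K) ^ (dD * i) • brk a (D b)) :
    ∀ i₁ i₂ i₃, ∀ a₁ ∈ Asub, ∀ a₂ ∈ Asub, ∀ a₃ ∈ Asub,
      a₁ ∈ gr i₁ → a₂ ∈ gr i₂ → a₃ ∈ gr i₃ →
      ((Asub.subtype ∘ₗ Submodule.linearProjOfIsCompl Asub Lsub hcompl.symm)
          (brk (brk (D a₁) a₂) a₃)
        = (-1 : K) ^ (i₁ * i₂) •
          (Asub.subtype ∘ₗ Submodule.linearProjOfIsCompl Asub Lsub hcompl.symm)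
            (brk (brk (D a₂) a₁) a₃)) ∧
      ((Asub.subtype ∘ₗ Submodule.linearProjOfIsCompl Asub Lsub hcompl.symm)
          (brk (brk (D a₁) a₂) a₃)
        = (-1 : K) ^ (i₂ * i₃) •
          (Asub.subtype ∘ₗ Submodule.linearProjOfIsCompl Asub Lsub hcompl.symm)
            (brk (brk (D a₁) a₃) a₂)) := by
  intro i₁ i₂ i₃ a₁ ha₁ a₂ ha₂ a₃ ha₃ hg₁ hg₂ hg₃
  constructor
  · rw [brk_derivation_swap_of_brk_eq_zero brk_antisymm hD_deg hD_der hg₁ hg₂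
      (hAab a₁ ha₁ a₂ ha₂), LinearMap.map_smul₂, map_smul]
  · rw [brk_brk_swap_of_brk_eq_zero brk_deg brk_antisymm brk_jacobi (hD_deg i₁ a₁ hg₁) hg₂ hg₃
      (hAab a₂ ha₂ a₃ ha₃), map_smul]

/-- Graded symmetry of the ternary derived bracket. -/
theorem ternary_derived_bracket_symmetric (K : Type*) [Field K] [CharZero K]
    (M : Type*) [AddCommGroup M] [Module K M]
    (gr : ℤ → Submodule K M) (grading_top : (⨆ i, gr i) = ⊤)
    (brk : M →ₗ[K] M →ₗ[K] M)
    (brk_deg : ∀ i j, ∀ a ∈ gr i, ∀ b ∈ gr j, brk a b ∈ gr (i + j))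
    (brk_antisymm : ∀ i j, ∀ a ∈ gr i, ∀ b ∈ gr j,
      brk a b = -((-1 : K) ^ (i * j) • brk b a))
    (brk_jacobi : ∀ i j, ∀ a ∈ gr i, ∀ b ∈ gr j, ∀ c,
      brk a (brk b c) = brk (brk a b) c + (-1 : K) ^ (i * j) • brk b (brk a c))
    (Lsub Asub : Submodule K M) (hcompl : IsCompl Lsub Asub)
    (hLsub : ∀ x ∈ Lsub, ∀ y ∈ Lsub, brk x y ∈ Lsub)
    (hAab : ∀ x ∈ Asub, ∀ y ∈ Asub, brk x y = 0)
    (D : M →ₗ[K] M) (dD : ℤ)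
    (hD_deg : ∀ i, ∀ a ∈ gr i, D a ∈ gr (i + dD))
    (hD_der : ∀ i, ∀ a ∈ gr i, ∀ b,
      D (brk a b) = brk (D a) b + (-1 : K) ^ (dD * i) • brk a (D b))
    (hDL : ∀ x ∈ Lsub, D x ∈ Lsub) :
    ∀ i₁ i₂ i₃, ∀ a₁ ∈ Asub, ∀ a₂ ∈ Asub, ∀ a₃ ∈ Asub,
      a₁ ∈ gr i₁ → a₂ ∈ gr i₂ → a₃ ∈ gr i₃ →
      ((Asub.subtype ∘ₗ Submodule.linearProjOfIsCompl Asub Lsub hcompl.symm)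
          (brk (brk (D a₁) a₂) a₃)
        = (-1 : K) ^ (i₁ * i₂) •
          (Asub.subtype ∘ₗ Submodule.linearProjOfIsCompl Asub Lsub hcompl.symm)
            (brk (brk (D a₂) a₁) a₃)) ∧
      ((Asub.subtype ∘ₗ Submodule.linearProjOfIsCompl Asub Lsub hcompl.symm)
          (brk (brk (D a₁) a₂) a₃)
        = (-1 : K) ^ (i₂ * i₃) •
          (Asub.subtype ∘ₗ Submodule.linearProjOfIsCompl Asub Lsub hcompl.symm)
            (brk (brk (D a₁) a₃) a₂)) :=
  ternary_derived_bracket_symmetric_general K M gr brk brk_deg brk_antisymm brk_jacobi Lsub Asub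
    hcompl hAab D dD hD_deg hD_der
end
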